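/- There exists a constant C > 0 such that for every smooth compactly supported function u : ℝ³ → ℝ, the double integral ∫_{ℝ³} ∫_{ℝ³} u(x)² u(y)² / ‖x − y‖ dy dx is at most C · ( ∫_{ℝ³} (‖∇u(x)‖² + u(x)²) dx )². -/

import Mathlib

open MeasureTheory

open Metric Set ENNReal NNReal

private lemma coulomb_ker_finite :
    (∫⁻ z : (EuclideanSpace ℝ (Fin 3)),
      ENNReal.ofReal ((if ‖z‖ ≤ 1 then ‖z‖⁻¹ else 0) ^ (3/2 : ℝ))) < ⊤ := by
  set F : (EuclideanSpace ℝ (Fin 3)) → ℝ≥0∞ := fun z => ENNReal.ofReal ((if ‖z‖ ≤ 1 then ‖z‖⁻¹ else 0) ^ (3/2 : ℝ)) with hF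
  set A : ℕ → Set (EuclideanSpace ℝ (Fin 3)) := fun j => closedBall 0 ((1/2 : ℝ)^j) \ ball 0 ((1/2 : ℝ)^(j+1)) with hA
  have hcover : (univ : Set (EuclideanSpace ℝ (Fin 3))) ⊆ ({0} ∪ ⋃ j, A j) ∪ (closedBall (0:(EuclideanSpace ℝ (Fin 3))) 1)ᶜ := by
    intro z _
    by_cases h1 : ‖z‖ ≤ 1
    · left
      by_cases h0 : z = 0
      · exact Or.inl (by simp [h0])
      · right
        have hzpos : 0 < ‖z‖ := norm_pos_iff.mpr h0
        have hex : ∃ j : ℕ, (1/2 : ℝ)^j < ‖z‖ :=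
          exists_pow_lt_of_lt_one hzpos (by norm_num)
        classical
        set k := Nat.find hex with hk
        have hspec : (1/2 : ℝ)^k < ‖z‖ := Nat.find_spec hex
        have hk0 : k ≠ 0 := by
          intro h
          rw [h] at hspec; simp at hspec; linarith
        obtain ⟨m, hm⟩ := Nat.exists_eq_succ_of_ne_zero hk0
        have hmin : ¬ ((1/2 : ℝ)^m < ‖z‖) := Nat.find_min hex (by omega)
        refine mem_iUnion.mpr ⟨m, ?_, ?_⟩
        · simpa [mem_closedBall, dist_eq_norm] using le_of_not_gt hmin
        · simp only [mem_ball, dist_eq_norm, sub_zero, not_lt]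
          rw [hm] at hspec
          exact hspec.le
    · right; simpa [mem_closedBall, dist_eq_norm] using h1
  have hbound : ∀ j : ℕ, (∫⁻ z in A j, F z) ≤
      ENNReal.ofReal 4 * ENNReal.ofReal (1/2 : ℝ)^j * volume (ball (0:(EuclideanSpace ℝ (Fin 3))) 1) := by
    intro j
    have hstep : ∀ z ∈ A j, F z ≤ ENNReal.ofReal (4 * 4^j) := by
      intro z hz
      obtain ⟨hz1, hz2⟩ := hz
      simp only [mem_closedBall, dist_eq_norm, sub_zero] at hz1
      simp only [mem_ball, dist_eq_norm, sub_zero, not_lt] at hz2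
      have hle1 : ‖z‖ ≤ 1 := hz1.trans (by
        apply pow_le_one₀ <;> norm_num)
      have hzpos : (0:ℝ) < ‖z‖ := lt_of_lt_of_le (by positivity) hz2
      have hinv : ‖z‖⁻¹ ≤ 2^(j+1) := by
        rw [inv_le_comm₀ hzpos (by positivity)]
        calc ((2:ℝ)^(j+1))⁻¹ = (1/2:ℝ)^(j+1) := by
              rw [one_div, inv_pow]
          _ ≤ ‖z‖ := hz2
      simp only [hF, if_pos hle1]
      apply ENNReal.ofReal_le_ofReal
      calc ‖z‖⁻¹ ^ (3/2 : ℝ) ≤ ((2:ℝ)^(j+1)) ^ (3/2 : ℝ) := by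
            apply Real.rpow_le_rpow (by positivity) hinv (by norm_num)
        _ ≤ ((2:ℝ)^(j+1)) ^ (2 : ℝ) := by
            apply Real.rpow_le_rpow_of_exponent_le (one_le_pow₀ (by norm_num)) (by norm_num)
        _ = 4 * 4^j := by
            rw [show ((2:ℝ)) = (((2:ℕ):ℝ)) by norm_num, Real.rpow_natCast, ← pow_mul,
              show (4:ℝ) = 2^2 by norm_num, ← pow_mul, ← pow_add]
            congr 1
            ring
    calc (∫⁻ z in A j, F z) ≤ ∫⁻ _ in A j, ENNReal.ofReal (4 * 4^j) := by
          apply setLIntegral_mono' (measurableSet_closedBall.diff measurableSet_ball) hstep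
      _ = ENNReal.ofReal (4 * 4^j) * volume (A j) := by
          rw [setLIntegral_const]
      _ ≤ ENNReal.ofReal (4 * 4^j) * volume (closedBall (0:(EuclideanSpace ℝ (Fin 3))) ((1/2:ℝ)^j)) := by
          gcongr; exact diff_subset
      _ = ENNReal.ofReal (4 * 4^j) * (ENNReal.ofReal (((1/2:ℝ)^j)^(Module.finrank ℝ (EuclideanSpace ℝ (Fin 3)))) *
            volume (ball (0:(EuclideanSpace ℝ (Fin 3))) 1)) := by
          rw [Measure.addHaar_closedBall _ _ (by positivity)]
      _ = ENNReal.ofReal 4 * ENNReal.ofReal (1/2 : ℝ)^j * volume (ball (0:(EuclideanSpace ℝ (Fin 3))) 1) := by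
          rw [← mul_assoc, ← ENNReal.ofReal_mul (by positivity), ← ENNReal.ofReal_pow (by norm_num),
            ← ENNReal.ofReal_mul (by positivity)]
          congr 2
          rw [finrank_euclideanSpace_fin,
            show ((1/2:ℝ)^j)^3 = ((1/2:ℝ)^3)^j by rw [← pow_mul, mul_comm, pow_mul],
            mul_assoc, ← mul_pow]
          norm_num
  calc (∫⁻ z : (EuclideanSpace ℝ (Fin 3)), F z) = ∫⁻ z in univ, F z := (setLIntegral_univ _).symm
    _ ≤ ∫⁻ z in ({0} ∪ ⋃ j, A j) ∪ (closedBall (0:(EuclideanSpace ℝ (Fin 3))) 1)ᶜ, F z := lintegral_mono_set hcover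
    _ ≤ (∫⁻ z in ({0} ∪ ⋃ j, A j), F z) + ∫⁻ z in (closedBall (0:(EuclideanSpace ℝ (Fin 3))) 1)ᶜ, F z :=
        lintegral_union_le _ _ _
    _ ≤ ((∫⁻ z in ({0} : Set (EuclideanSpace ℝ (Fin 3))), F z) + ∫⁻ z in ⋃ j, A j, F z) + 0 := by
        gcongr
        · exact lintegral_union_le _ _ _
        · have hvan : ∀ z ∈ (closedBall (0:(EuclideanSpace ℝ (Fin 3))) 1)ᶜ, F z = 0 := by
            intro z hz
            simp only [mem_compl_iff, mem_closedBall, dist_eq_norm, sub_zero, not_le] at hz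
            simp only [hF, if_neg (not_le.mpr hz)]
            rw [Real.zero_rpow (by norm_num), ENNReal.ofReal_zero]
          have hz0 : (∫⁻ z in (closedBall (0:(EuclideanSpace ℝ (Fin 3))) 1)ᶜ, F z) = 0 := by
            rw [setLIntegral_congr_fun measurableSet_closedBall.compl
                  hvan]
            simp
          exact hz0.le
    _ = (∫⁻ z in ⋃ j, A j, F z) := by
        rw [setLIntegral_measure_zero _ _ (measure_singleton 0)]
        simp
    _ ≤ ∑' j, ∫⁻ z in A j, F z := lintegral_iUnion_le _ _
    _ ≤ ∑' j, ENNReal.ofReal 4 * ENNReal.ofReal (1/2 : ℝ)^j * volume (ball (0:(EuclideanSpace ℝ (Fin 3))) 1) :=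
        ENNReal.tsum_le_tsum hbound
    _ = ENNReal.ofReal 4 * volume (ball (0:(EuclideanSpace ℝ (Fin 3))) 1) * ∑' j, ENNReal.ofReal (1/2 : ℝ)^j := by
        rw [ENNReal.tsum_mul_right, ENNReal.tsum_mul_left]; ring
    _ < ⊤ := by
        rw [ENNReal.tsum_geometric]
        apply ENNReal.mul_lt_top
        · exact ENNReal.mul_lt_top ENNReal.ofReal_lt_top measure_ball_lt_top
        · rw [ENNReal.inv_lt_top]
          exact tsub_pos_iff_lt.mpr (ENNReal.ofReal_lt_one.mpr (by norm_num))


/-- There is a constant `C > 0` such that for every smooth compactly supported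
`u : ℝ³ → ℝ`, the Coulomb energy `∫∫ u(x)² u(y)² / ‖x - y‖ dy dx` is at most
`C (∫ (‖∇u‖² + u²))²`, i.e. at most `C ‖u‖_{H¹}⁴`. -/
theorem coulomb_energy_le_H1 :
    ∃ C : ℝ, 0 < C ∧
      ∀ u : EuclideanSpace ℝ (Fin 3) → ℝ, ContDiff ℝ (⊤ : ℕ∞) u → HasCompactSupport u →
        (∫⁻ x : EuclideanSpace ℝ (Fin 3), ∫⁻ y : EuclideanSpace ℝ (Fin 3),
            ENNReal.ofReal (u x ^ 2 * u y ^ 2 / ‖x - y‖)) ≤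
          ENNReal.ofReal
            (C * (∫ x : EuclideanSpace ℝ (Fin 3), (‖gradient u x‖ ^ 2 + u x ^ 2)) ^ 2) := by
  classical
  -- the kernel and its L^{3/2} norm
  set h : (EuclideanSpace ℝ (Fin 3)) → ℝ := fun z => if ‖z‖ ≤ 1 then ‖z‖⁻¹ else 0 with hh
  have h_meas : Measurable h :=
    Measurable.ite (measurableSet_le measurable_norm measurable_const)
      measurable_norm.inv measurable_const
  have h_nonneg : ∀ z, 0 ≤ h z := by
    intro z; rw [hh]; dsimp only; split <;> positivity
  set g : (EuclideanSpace ℝ (Fin 3)) → ℝ≥0∞ := fun z => ENNReal.ofReal (h z) with hg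
  have g_meas : Measurable g := ENNReal.measurable_ofReal.comp h_meas
  set K : ℝ≥0∞ := ∫⁻ z : (EuclideanSpace ℝ (Fin 3)), g z ^ (3/2 : ℝ) with hK
  have hKfin : K < ⊤ := by
    have : ∀ z : (EuclideanSpace ℝ (Fin 3)), g z ^ (3/2 : ℝ) = ENNReal.ofReal (h z ^ (3/2 : ℝ)) := by
      intro z
      rw [hg]
      rw [ENNReal.ofReal_rpow_of_nonneg (h_nonneg z) (by norm_num)]
    rw [hK]
    simp_rw [this]
    exact coulomb_ker_finite
  set Kq : ℝ≥0∞ := K ^ (1 / (3/2 : ℝ)) with hKq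
  have hKqfin : Kq ≠ ⊤ := by
    rw [hKq]
    exact ENNReal.rpow_ne_top_of_nonneg (by norm_num) hKfin.ne
  set C₀ : ℝ≥0 := eLpNormLESNormFDerivOfEqInnerConst (volume : Measure (EuclideanSpace ℝ (Fin 3))) 2 with hC₀
  refine ⟨(C₀ : ℝ)^2 * Kq.toReal + 1, by positivity, ?_⟩
  intro u hu h2u
  have hu1 : ContDiff ℝ 1 u := hu.of_le (by simp)
  have huc : Continuous u := hu.continuous
  have hu_meas : Measurable u := huc.measurable
  -- pointwise kernel bound
  have hker : ∀ x y : (EuclideanSpace ℝ (Fin 3)), ENNReal.ofReal (‖x - y‖⁻¹) ≤ g (x - y) + 1 := by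
    intro x y
    by_cases hxy : ‖x - y‖ ≤ 1
    · rw [hg]; dsimp only; rw [hh]; dsimp only; rw [if_pos hxy]
      exact le_self_add
    · refine le_add_left ?_
      rw [ENNReal.ofReal_le_one]
      rw [inv_le_one_iff₀]
      right; linarith [not_le.mp hxy]
  have hpt : ∀ x y : (EuclideanSpace ℝ (Fin 3)), ENNReal.ofReal (u x ^ 2 * u y ^ 2 / ‖x - y‖) ≤
      ENNReal.ofReal (u x ^ 2) * (ENNReal.ofReal (u y ^ 2) * (g (x - y) + 1)) := by
    intro x y
    rw [div_eq_mul_inv, mul_assoc, ENNReal.ofReal_mul (by positivity),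
      ENNReal.ofReal_mul (by positivity)]
    gcongr
    exact hker x y
  -- integrability facts
  have hgrad_eq : ∀ x : (EuclideanSpace ℝ (Fin 3)), ‖gradient u x‖ = ‖fderiv ℝ u x‖ := by
    intro x
    rw [gradient]
    exact LinearIsometryEquiv.norm_map _ _
  have hfc : Continuous (fderiv ℝ u) := hu.continuous_fderiv (by simp)
  have hfcs : HasCompactSupport (fderiv ℝ u) := h2u.fderiv (𝕜 := ℝ)
  have hbi : Integrable (fun x : (EuclideanSpace ℝ (Fin 3)) => u x ^ 2) := by
    apply Continuous.integrable_of_hasCompactSupport (by fun_prop)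
    exact h2u.comp_left (g := fun t : ℝ => t ^ 2) (by norm_num)
  have hgc : Continuous (gradient u) := by
    have hge : gradient u = fun x => (InnerProductSpace.toDual ℝ (EuclideanSpace ℝ (Fin 3))).symm (fderiv ℝ u x) := rfl
    rw [hge]
    exact (LinearIsometryEquiv.continuous _).comp hfc
  have hgcs : HasCompactSupport (gradient u) := by
    have : gradient u = fun x => (InnerProductSpace.toDual ℝ (EuclideanSpace ℝ (Fin 3))).symm (fderiv ℝ u x) := rfl
    rw [this]
    exact hfcs.comp_left (map_zero _)
  have hgi : Integrable (fun x : (EuclideanSpace ℝ (Fin 3)) => ‖gradient u x‖ ^ 2) := by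
    apply Continuous.integrable_of_hasCompactSupport (by fun_prop)
    exact hgcs.comp_left (g := fun v : (EuclideanSpace ℝ (Fin 3)) => ‖v‖ ^ 2) (by simp)
  have hb_nonneg : (0:ℝ) ≤ ∫ x : (EuclideanSpace ℝ (Fin 3)), u x ^ 2 := integral_nonneg fun x => by positivity
  have hg_nonneg : (0:ℝ) ≤ ∫ x : (EuclideanSpace ℝ (Fin 3)), ‖gradient u x‖ ^ 2 := integral_nonneg fun x => by positivity
  set t : ℝ := ∫ x : (EuclideanSpace ℝ (Fin 3)), (‖gradient u x‖ ^ 2 + u x ^ 2) with ht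
  have ht_eq : t = (∫ x : (EuclideanSpace ℝ (Fin 3)), ‖gradient u x‖ ^ 2) + ∫ x : (EuclideanSpace ℝ (Fin 3)), u x ^ 2 := by
    rw [ht]; exact integral_add hgi hbi
  set T : ℝ≥0∞ := ENNReal.ofReal t with hT
  set B : ℝ≥0∞ := ∫⁻ x : (EuclideanSpace ℝ (Fin 3)), ENNReal.ofReal (u x ^ 2) with hB
  have hB_eq : B = ENNReal.ofReal (∫ x : (EuclideanSpace ℝ (Fin 3)), u x ^ 2) := by
    rw [hB, ofReal_integral_eq_lintegral_ofReal hbi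
      (Filter.Eventually.of_forall fun x => by positivity)]
  have hBT : B ≤ T := by
    rw [hB_eq, hT]
    apply ENNReal.ofReal_le_ofReal
    rw [ht_eq]; linarith
  set D : ℝ≥0∞ := ∫⁻ x : (EuclideanSpace ℝ (Fin 3)), (‖fderiv ℝ u x‖₊ : ℝ≥0∞) ^ (2:ℝ) with hD
  have hD_eq : D = ENNReal.ofReal (∫ x : (EuclideanSpace ℝ (Fin 3)), ‖gradient u x‖ ^ 2) := by
    rw [hD, ofReal_integral_eq_lintegral_ofReal hgi
      (Filter.Eventually.of_forall fun x => by positivity)]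
    congr 1
    ext x
    rw [hgrad_eq x, ← Real.rpow_natCast ‖fderiv ℝ u x‖ 2,
      ← ENNReal.ofReal_rpow_of_nonneg (norm_nonneg _) (by norm_num),
      ofReal_norm, enorm_eq_nnnorm]
    norm_num
  have hDT : D ≤ T := by
    rw [hD_eq, hT]
    apply ENNReal.ofReal_le_ofReal
    rw [ht_eq]; linarith
  -- Sobolev: A ≤ C₀² • D
  set A : ℝ≥0∞ := (∫⁻ y : (EuclideanSpace ℝ (Fin 3)), ENNReal.ofReal (u y ^ 2) ^ (3:ℝ)) ^ (1/(3:ℝ)) with hA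
  have hA_sob : A ≤ (C₀ : ℝ≥0∞) ^ 2 * D := by
    have hsob := eLpNorm_le_eLpNorm_fderiv_of_eq_inner (μ := (volume : Measure (EuclideanSpace ℝ (Fin 3))))
      (u := u) hu1 h2u (p := 2) (p' := 6) (by norm_num)
      (by rw [finrank_euclideanSpace_fin]; norm_num)
      (by rw [finrank_euclideanSpace_fin]; push_cast; norm_num)
    have h6 : eLpNorm u ((6:ℝ≥0) : ℝ≥0∞) volume
        = (∫⁻ y : (EuclideanSpace ℝ (Fin 3)), (‖u y‖₊ : ℝ≥0∞) ^ (6:ℝ)) ^ (1/(6:ℝ)) := by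
      rw [eLpNorm_eq_lintegral_rpow_enorm_toReal (by norm_num) (by norm_num)]
      simp only [enorm_eq_nnnorm]
      norm_num
    have h2' : eLpNorm (fderiv ℝ u) ((2:ℝ≥0) : ℝ≥0∞) volume
        = D ^ (1/(2:ℝ)) := by
      rw [eLpNorm_eq_lintegral_rpow_enorm_toReal (by norm_num) (by norm_num), hD]
      simp only [enorm_eq_nnnorm]
      norm_num
    have hpow : ∀ y : (EuclideanSpace ℝ (Fin 3)), ENNReal.ofReal (u y ^ 2) = (‖u y‖₊ : ℝ≥0∞) ^ (2:ℕ) := by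
      intro y
      rw [show u y ^ 2 = ‖u y‖ ^ 2 by rw [Real.norm_eq_abs, sq_abs],
        ENNReal.ofReal_pow (norm_nonneg _), ofReal_norm, enorm_eq_nnnorm]
    have hint : ∀ y : (EuclideanSpace ℝ (Fin 3)), ENNReal.ofReal (u y ^ 2) ^ (3:ℝ) = (‖u y‖₊ : ℝ≥0∞) ^ (6:ℝ) := by
      intro y
      rw [hpow y, ← ENNReal.rpow_natCast, ← ENNReal.rpow_mul]
      norm_num
    have hA6 : A = (eLpNorm u ((6:ℝ≥0) : ℝ≥0∞) volume) ^ (2:ℝ) := by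
      rw [hA, h6, ← ENNReal.rpow_mul, lintegral_congr hint]
      norm_num
    rw [hA6]
    calc (eLpNorm u ((6:ℝ≥0) : ℝ≥0∞) volume) ^ (2:ℝ)
        ≤ ((C₀ : ℝ≥0∞) * eLpNorm (fderiv ℝ u) ((2:ℝ≥0) : ℝ≥0∞) volume) ^ (2:ℝ) := by
          gcongr
          exact hsob
      _ = (C₀ : ℝ≥0∞) ^ 2 * D := by
          rw [ENNReal.mul_rpow_of_nonneg _ _ (by norm_num), h2', ← ENNReal.rpow_mul]
          norm_num
  -- Hölder for the near part
  have hholder : ∀ x : (EuclideanSpace ℝ (Fin 3)), (∫⁻ y : (EuclideanSpace ℝ (Fin 3)), ENNReal.ofReal (u y ^ 2) * g (x - y)) ≤ A * Kq := by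
    intro x
    have htr : (∫⁻ y : (EuclideanSpace ℝ (Fin 3)), g (x - y) ^ (3/2:ℝ)) = K := by
      rw [hK]
      exact (Measure.measurePreserving_sub_left volume x).lintegral_comp
        (g_meas.pow_const _)
    calc (∫⁻ y : (EuclideanSpace ℝ (Fin 3)), ENNReal.ofReal (u y ^ 2) * g (x - y))
        ≤ (∫⁻ y : (EuclideanSpace ℝ (Fin 3)), ENNReal.ofReal (u y ^ 2) ^ (3:ℝ)) ^ (1/(3:ℝ)) *
          (∫⁻ y : (EuclideanSpace ℝ (Fin 3)), g (x - y) ^ (3/2:ℝ)) ^ (1/(3/2:ℝ)) := by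
          apply ENNReal.lintegral_mul_le_Lp_mul_Lq volume
            (⟨by norm_num, by norm_num, by norm_num⟩ : Real.HolderConjugate 3 (3/2))
            (by fun_prop) ((g_meas.comp (by fun_prop)).aemeasurable)
      _ = A * Kq := by rw [htr, hA, hKq]
  -- put inner integral together
  have hinner : ∀ x : (EuclideanSpace ℝ (Fin 3)), (∫⁻ y : (EuclideanSpace ℝ (Fin 3)), ENNReal.ofReal (u x ^ 2 * u y ^ 2 / ‖x - y‖)) ≤
      ENNReal.ofReal (u x ^ 2) * (A * Kq + B) := by
    intro x
    calc (∫⁻ y : (EuclideanSpace ℝ (Fin 3)), ENNReal.ofReal (u x ^ 2 * u y ^ 2 / ‖x - y‖))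
        ≤ ∫⁻ y : (EuclideanSpace ℝ (Fin 3)), ENNReal.ofReal (u x ^ 2) * (ENNReal.ofReal (u y ^ 2) * (g (x - y) + 1)) :=
          lintegral_mono fun y => hpt x y
      _ = ENNReal.ofReal (u x ^ 2) * ∫⁻ y : (EuclideanSpace ℝ (Fin 3)), ENNReal.ofReal (u y ^ 2) * (g (x - y) + 1) := by
          rw [lintegral_const_mul _ (by fun_prop)]
      _ = ENNReal.ofReal (u x ^ 2) *
          ((∫⁻ y : (EuclideanSpace ℝ (Fin 3)), ENNReal.ofReal (u y ^ 2) * g (x - y)) + ∫⁻ y, ENNReal.ofReal (u y ^ 2)) := by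
          congr 1
          rw [← lintegral_add_left (by fun_prop)]
          exact lintegral_congr fun y => by ring
      _ ≤ ENNReal.ofReal (u x ^ 2) * (A * Kq + B) := by
          gcongr
          · exact hholder x
  -- outer integral
  have houter : (∫⁻ x : (EuclideanSpace ℝ (Fin 3)), ∫⁻ y : (EuclideanSpace ℝ (Fin 3)), ENNReal.ofReal (u x ^ 2 * u y ^ 2 / ‖x - y‖)) ≤
      B * (A * Kq + B) := by
    calc (∫⁻ x : (EuclideanSpace ℝ (Fin 3)), ∫⁻ y : (EuclideanSpace ℝ (Fin 3)), ENNReal.ofReal (u x ^ 2 * u y ^ 2 / ‖x - y‖))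
        ≤ ∫⁻ x : (EuclideanSpace ℝ (Fin 3)), ENNReal.ofReal (u x ^ 2) * (A * Kq + B) := lintegral_mono hinner
      _ = B * (A * Kq + B) := by rw [lintegral_mul_const _ (by fun_prop), hB]
  refine houter.trans ?_
  -- final assembly
  have hfinal : B * (A * Kq + B) ≤ ((C₀ : ℝ≥0∞)^2 * Kq + 1) * T^2 := by
    calc B * (A * Kq + B) ≤ T * (((C₀ : ℝ≥0∞)^2 * D) * Kq + T) := by
          gcongr
      _ ≤ T * (((C₀ : ℝ≥0∞)^2 * T) * Kq + T) := by gcongr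
      _ = ((C₀ : ℝ≥0∞)^2 * Kq + 1) * T^2 := by ring
  refine hfinal.trans ?_
  have hCbound : ((C₀ : ℝ≥0∞)^2 * Kq + 1) ≤ ENNReal.ofReal ((C₀ : ℝ)^2 * Kq.toReal + 1) := by
    rw [ENNReal.ofReal_add (by positivity) (by norm_num), ENNReal.ofReal_one]
    gcongr
    rw [ENNReal.ofReal_mul (by positivity), ENNReal.ofReal_toReal hKqfin,
      ← ENNReal.ofReal_coe_nnreal]
    rw [← ENNReal.ofReal_pow (by positivity)]
  have hT2 : T^2 = ENNReal.ofReal (t^2) := by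
    rw [hT, ← ENNReal.ofReal_pow (by rw [ht_eq]; positivity)]
  calc ((C₀ : ℝ≥0∞)^2 * Kq + 1) * T^2
      ≤ ENNReal.ofReal ((C₀ : ℝ)^2 * Kq.toReal + 1) * ENNReal.ofReal (t^2) := by
        rw [← hT2]; gcongr
    _ = ENNReal.ofReal (((C₀ : ℝ)^2 * Kq.toReal + 1) * t^2) := by
        rw [ENNReal.ofReal_mul (by positivity)]
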